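/- Let n be even with n ≥ 4, and let 2 ≤ z ≤ ⌊(n-1)/2⌋. Let x : Fin n → ℝ be sorted and suppose there exists an optimal utilitarian location y* with y* ≥ x_{n/2 + 1}. Then OPT_SC(x_{n/2 + 1}, x, z) ≤ ((n-2)/(n - 2z + 2)) · OPT*_SC(x, z). -/

import Mathlib

/-- Utilitarian social cost with `z` outliers of placing the facility at `y`:
minimum over sets `S` of `n - z` non-outliers of the total distance. -/
noncomputable def OPTsc (n z : ℕ) (x : Fin n → ℝ) (y : ℝ) : ℝ :=
  sInf {c : ℝ | ∃ S : Finset (Fin n), S.card = n - z ∧ c = ∑ i ∈ S, |y - x i|}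

/-- Optimal utilitarian social cost with `z` outliers. -/
noncomputable def OPTscStar (n z : ℕ) (x : Fin n → ℝ) : ℝ :=
  sInf (Set.range (OPTsc n z x))


/-!
Let `m` be the right median and `y ≥ m` an optimal location, served by a set `S` of `n - z`
agents with cost `K`; put `a = y - m`. At least `n/2 + 1 - z` agents of `S` lie at or left of
`m`: each of them pays at least `a` at `y` and saves exactly `a` when the facility moves to `m`,
while every other agent pays at most `a` more. Hence serving `S` from `m` costs at most
`K + (z - 2) a`, and `(n/2 + 1 - z) a ≤ K` turns this into the ratio `(n - 2) / (n - 2z + 2)`.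
-/

open Finset

section OutlierCost

variable {n z : ℕ} (x : Fin n → ℝ)

lemma finite_outlierCosts (y : ℝ) :
    {c : ℝ | ∃ S : Finset (Fin n), #S = n - z ∧ c = ∑ i ∈ S, |y - x i|}.Finite :=
  (Set.finite_range fun S : Finset (Fin n) => ∑ i ∈ S, |y - x i|).subset
    (by rintro c ⟨S, -, rfl⟩; exact ⟨S, rfl⟩)

lemma OPTsc_le_sum {S : Finset (Fin n)} (hS : #S = n - z) (y : ℝ) :
    OPTsc n z x y ≤ ∑ i ∈ S, |y - x i| :=
  csInf_le (finite_outlierCosts x y).bddBelow ⟨S, hS, rfl⟩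

lemma exists_OPTsc_eq_sum (y : ℝ) :
    ∃ S : Finset (Fin n), #S = n - z ∧ OPTsc n z x y = ∑ i ∈ S, |y - x i| := by
  obtain ⟨S, -, hS⟩ := exists_subset_card_eq (s := (univ : Finset (Fin n))) (n := n - z) (by simp)
  have hne : {c : ℝ | ∃ S : Finset (Fin n), #S = n - z ∧ c = ∑ i ∈ S, |y - x i|}.Nonempty :=
    ⟨_, S, hS, rfl⟩
  exact hne.csInf_mem (finite_outlierCosts x y)

end OutlierCost

lemma le_card_filter_le_add_card_compl {n : ℕ} (S : Finset (Fin n)) (j : Fin n) :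
    (j : ℕ) + 1 ≤ #(S.filter (· ≤ j)) + #Sᶜ :=
  calc (j : ℕ) + 1 = #(Iic j) := (Fin.card_Iic j).symm
    _ ≤ #(S.filter (· ≤ j) ∪ Sᶜ) := card_le_card fun i hi => by by_cases i ∈ S <;> simp_all
    _ ≤ _ := card_union_le _ _

section MoveLeft

variable {ι : Type*} (S : Finset ι) (p : ι → Prop) [DecidablePred p] (f : ι → ℝ) {m y : ℝ}

lemma card_filter_mul_le_sum_abs_sub (hp : ∀ i ∈ S, p i → f i ≤ m) :
    #(S.filter p) * (y - m) ≤ ∑ i ∈ S, |y - f i| :=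
  calc #(S.filter p) * (y - m) = ∑ _i ∈ S.filter p, (y - m) := by rw [sum_const, nsmul_eq_mul]
    _ ≤ ∑ i ∈ S.filter p, |y - f i| := sum_le_sum fun i hi => by
        have := hp i (mem_filter.1 hi).1 (mem_filter.1 hi).2
        linarith [le_abs_self (y - f i)]
    _ ≤ ∑ i ∈ S, |y - f i| :=
        sum_le_sum_of_subset_of_nonneg (filter_subset _ _) fun _ _ _ => abs_nonneg _

lemma sum_abs_sub_add_card_filter_le (hmy : m ≤ y) (hp : ∀ i ∈ S, p i → f i ≤ m) :
    ∑ i ∈ S, |m - f i| + 2 * #(S.filter p) * (y - m) ≤ ∑ i ∈ S, |y - f i| + #S * (y - m) := by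
  have hsum : ∑ i ∈ S, (|m - f i| + if p i then 2 * (y - m) else 0) ≤
      ∑ i ∈ S, (|y - f i| + (y - m)) := sum_le_sum fun i hi => by
    split_ifs with hpi
    · have := hp i hi hpi
      rw [abs_of_nonneg (by linarith : 0 ≤ m - f i), abs_of_nonneg (by linarith : 0 ≤ y - f i)]
      linarith
    · have := abs_sub_le m y (f i)
      rw [abs_sub_comm m y, abs_of_nonneg (sub_nonneg.2 hmy)] at this
      linarith
  rw [sum_add_distrib, sum_add_distrib, sum_ite, sum_const_zero, add_zero, sum_const, sum_const,
    nsmul_eq_mul, nsmul_eq_mul] at hsum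
  linarith

end MoveLeft

lemma mul_le_of_cost_bounds {k z c a K C : ℝ} (hz : 2 ≤ z) (hzk : z + 1 ≤ k) (ha : 0 ≤ a)
    (hc : k + 1 - z ≤ c) (hK : c * a ≤ K) (hC : C + 2 * c * a ≤ K + (2 * k - z) * a) :
    C * (2 * k - 2 * z + 2) ≤ (2 * k - 2) * K := by
  have hCK : C ≤ K + (z - 2) * a := by nlinarith
  have haK : (k + 1 - z) * a ≤ K := by nlinarith
  nlinarith

theorem sum_abs_sub_median_mul_le {n z : ℕ} {x : Fin n → ℝ} (hx : Monotone x) {j : Fin n}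
    (hn : n = 2 * j) (hz : 2 ≤ z) (hzj : z + 1 ≤ j) {S : Finset (Fin n)} (hS : #S = n - z)
    {y : ℝ} (hy : x j ≤ y) :
    (∑ i ∈ S, |x j - x i|) * (n - 2 * z + 2) ≤ (n - 2) * ∑ i ∈ S, |y - x i| := by
  have hleft : ∀ i ∈ S, i ≤ j → x i ≤ x j := fun _ _ => (hx ·)
  have hcount := le_card_filter_le_add_card_compl S j
  rw [card_compl, Fintype.card_fin, hS] at hcount
  have hcountR : (j : ℝ) + 1 - z ≤ #(S.filter (· ≤ j)) := by
    rw [sub_le_iff_le_add]; exact_mod_cast (by omega : (j : ℕ) + 1 ≤ #(S.filter (· ≤ j)) + z)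
  have hmove := sum_abs_sub_add_card_filter_le S (· ≤ j) x hy hleft
  have hnR : (n : ℝ) = 2 * j := by exact_mod_cast hn
  rw [hS, Nat.cast_sub (by omega), hnR] at hmove
  rw [hnR]
  exact mul_le_of_cost_bounds (by exact_mod_cast hz) (by exact_mod_cast hzj) (sub_nonneg.2 hy)
    hcountR (card_filter_mul_le_sum_abs_sub S _ x hleft) hmove

theorem stmt_16 (n z : ℕ) (hn : 4 ≤ n) (heven : Even n) (hz1 : 2 ≤ z) (hz2 : z ≤ (n - 1) / 2)
    (x : Fin n → ℝ) (hx : Monotone x)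
    (hopt : ∃ ystar : ℝ, OPTsc n z x ystar = OPTscStar n z x ∧ x ⟨n / 2, by omega⟩ ≤ ystar) :
    OPTsc n z x (x ⟨n / 2, by omega⟩) ≤
      (((n : ℝ) - 2) / ((n : ℝ) - 2 * z + 2)) * OPTscStar n z x := by
  obtain ⟨y, hy, hmy⟩ := hopt
  obtain ⟨S, hS, hSy⟩ := exists_OPTsc_eq_sum (z := z) x y
  have hn2 : n = 2 * (n / 2) := by rw [Nat.even_iff] at heven; omega
  have hden : (0 : ℝ) < n - 2 * z + 2 := by
    have : (2 * z + 1 : ℝ) ≤ n := by exact_mod_cast (by omega : 2 * z + 1 ≤ n)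
    linarith
  rw [← hy, hSy, div_mul_eq_mul_div, le_div_iff₀ hden]
  calc OPTsc n z x (x ⟨n / 2, _⟩) * (n - 2 * z + 2)
      ≤ (∑ i ∈ S, |x ⟨n / 2, _⟩ - x i|) * (n - 2 * z + 2) :=
        mul_le_mul_of_nonneg_right (OPTsc_le_sum x hS _) hden.le
    _ ≤ (n - 2) * ∑ i ∈ S, |y - x i| :=
        sum_abs_sub_median_mul_le hx hn2 hz1 (show z + 1 ≤ n / 2 by omega) hS hmy
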